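/- arXiv:0911.2551 — 3 statements merged into one kernel-verified Lean document; each statement's English description precedes it below -/
import Mathlib

section
/- Let N ≥ 1 be an integer, let π_1,…,π_N be strictly positive weights, let Y_1,…,Y_N be mutually independent real random variables and Z_1,…,Z_N be mutually independent real random variables such that Z_i is stochastically larger than Y_i for every i. Then for every threshold η ∈ ℝ, P( max_{1≤n≤N} log( Σ_{k=1}^n π_k exp( Σ_{i=k}^n Y_i ) ) ≥ η ) ≤ P( max_{1≤n≤N} log( Σ_{k=1}^n π_k exp( Σ_{i=k}^n Z_i ) ) ≥ η ). -/
/-!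
The statistic is nondecreasing in each coordinate (the weights are positive), so the event
`{η ≤ shiryaevStat x}` is a measurable upper set of `ℝᴺ`. By independence the laws of `Y` and `Z`
are the products of their marginals, and it suffices that the order "`μ S ≤ ν S` for every
measurable upper set `S`" passes from the marginals to products. On `ℝ` an upper set is `∅`,
`univ`, `Ici a` or `Ioi a`, and the last two are increasing unions of sets `Ici t`. For a product
`μ ⊗ ν` the sections of an upper set are upper sets whose `ν`-measure is monotone in the first
coordinate, and by the layer-cake formula integrals of monotone functions respect the order.
-/

open MeasureTheory ProbabilityTheory

/-- The Shiryaev statistic `max_{1 ≤ n ≤ N} log (∑_{k=1}^n π_k exp (∑_{i=k}^n x_i))`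
of `x_1,…,x_N` with weights `π`. -/
noncomputable def shiryaevStat (N : ℕ) (hN : 0 < N) (π : Fin N → ℝ) (x : Fin N → ℝ) : ℝ :=
  Finset.univ.sup' ⟨⟨0, hN⟩, Finset.mem_univ _⟩ fun n : Fin N =>
    Real.log (∑ k ∈ Finset.Iic n, π k * Real.exp (∑ i ∈ Finset.Icc k n, x i))

open Set
open scoped ENNReal

/-- `StochLE μ ν`: `ν` is stochastically larger than `μ`. -/
def StochLE {α : Type*} [Preorder α] [MeasurableSpace α] (μ ν : Measure α) : Prop :=
  ∀ s, MeasurableSet s → IsUpperSet s → μ s ≤ ν s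

lemma IsUpperSet.eq_empty_or_univ_or_Ici_or_Ioi {α : Type*} [ConditionallyCompleteLinearOrder α]
    {s : Set α} (hs : IsUpperSet s) : s = ∅ ∨ s = univ ∨ s = Ici (sInf s) ∨ s = Ioi (sInf s) := by
  rcases s.eq_empty_or_nonempty with h | hne
  · exact Or.inl h
  by_cases hb : BddBelow s
  · have hIoi : Ioi (sInf s) ⊆ s := fun x hx => by
      obtain ⟨y, hy, hyx⟩ := (isGLB_lt_iff (isGLB_csInf hne hb)).1 hx
      exact hs hyx.le hy
    exact Or.inr (Or.inr (mem_Ici_Ioi_of_subset_of_subset hIoi fun x hx => csInf_le hb hx))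
  · refine Or.inr (Or.inl (eq_univ_of_forall fun x => ?_))
    obtain ⟨y, hy, hyx⟩ := not_bddBelow_iff.1 hb x
    exact hs hyx.le hy

lemma measure_iUnion_Ici_le {μ ν : Measure ℝ} (h : ∀ t, μ (Ici t) ≤ ν (Ici t)) {u : ℕ → ℝ}
    (hu : Antitone u) : μ (⋃ n, Ici (u n)) ≤ ν (⋃ n, Ici (u n)) := by
  have hmono : Monotone fun n => Ici (u n) := fun m n hmn => Ici_subset_Ici.2 (hu hmn)
  rw [hmono.measure_iUnion, hmono.measure_iUnion]
  exact iSup_mono fun n => h (u n)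

lemma stochLE_of_measure_Ici_le {μ ν : Measure ℝ} (h : ∀ t, μ (Ici t) ≤ ν (Ici t)) :
    StochLE μ ν := by
  intro s _ hs
  rcases hs.eq_empty_or_univ_or_Ici_or_Ioi with hs | hs | hs | hs <;> rw [hs]
  · simp
  · have hcover : (univ : Set ℝ) = ⋃ n : ℕ, Ici (-(n : ℝ)) := (eq_univ_of_forall fun x : ℝ =>
      mem_iUnion.2 ⟨⌈-x⌉₊, mem_Ici.2 (neg_le.1 (Nat.le_ceil (-x)))⟩).symm
    rw [hcover]
    exact measure_iUnion_Ici_le h fun m n hmn => neg_le_neg (Nat.cast_le.2 hmn)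
  · exact h _
  · obtain ⟨u, hu, hu_mem, hu_lim⟩ := exists_seq_strictAnti_tendsto' (lt_add_one (sInf s))
    rw [← iUnion_Ici_eq_Ioi_of_lt_of_tendsto (fun n => (hu_mem n).1) hu_lim]
    exact measure_iUnion_Ici_le h hu.antitone

section StochLE

variable {α β : Type*} [Preorder α] [MeasurableSpace α] [Preorder β] [MeasurableSpace β]

lemma StochLE.lintegral_le {μ ν : Measure α} (h : StochLE μ ν) {g : α → ℝ≥0∞}
    (hg : Monotone g) (hg_meas : Measurable g) (hg_fin : ∀ a, g a ≠ ∞) :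
    ∫⁻ a, g a ∂μ ≤ ∫⁻ a, g a ∂ν := by
  have hf : Monotone fun a => (g a).toReal := fun a b hab => ENNReal.toReal_mono (hg_fin b) (hg hab)
  have layer_cake (ρ : Measure α) : ∫⁻ a, g a ∂ρ = ∫⁻ t in Ioi 0, ρ {a | t ≤ (g a).toReal} := by
    rw [← lintegral_eq_lintegral_meas_le ρ (.of_forall fun a => ENNReal.toReal_nonneg)
      hg_meas.ennreal_toReal.aemeasurable]
    simp only [ENNReal.ofReal_toReal (hg_fin _)]
  rw [layer_cake μ, layer_cake ν]
  exact lintegral_mono fun t => h _ (measurableSet_le measurable_const hg_meas.ennreal_toReal)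
    fun a b hab ha => ha.trans (hf hab)

lemma StochLE.map {μ ν : Measure α} (h : StochLE μ ν) {f : α → β} (hf : Monotone f)
    (hf_meas : Measurable f) : StochLE (μ.map f) (ν.map f) := by
  intro s hs_meas hs
  rw [Measure.map_apply hf_meas hs_meas, Measure.map_apply hf_meas hs_meas]
  exact h _ (hf_meas hs_meas) (hs.preimage hf)

lemma StochLE.prod {μ μ' : Measure α} {ν ν' : Measure β} [SFinite ν] [IsFiniteMeasure ν']
    (hμ : StochLE μ μ') (hν : StochLE ν ν') : StochLE (μ.prod ν) (μ'.prod ν') := by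
  intro s hs_meas hs
  have hsec_meas (a : α) : MeasurableSet (Prod.mk a ⁻¹' s) := measurable_prodMk_left hs_meas
  have hsec (a : α) : IsUpperSet (Prod.mk a ⁻¹' s) := hs.preimage fun _ _ hb => ⟨le_rfl, hb⟩
  have hsec_mono : Monotone fun a => ν' (Prod.mk a ⁻¹' s) :=
    fun a a' ha => measure_mono fun b hb => hs (show (a, b) ≤ (a', b) from ⟨ha, le_rfl⟩) hb
  rw [Measure.prod_apply hs_meas, Measure.prod_apply hs_meas]
  calc ∫⁻ a, ν (Prod.mk a ⁻¹' s) ∂μ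
      ≤ ∫⁻ a, ν' (Prod.mk a ⁻¹' s) ∂μ := lintegral_mono fun a => hν _ (hsec_meas a) (hsec a)
    _ ≤ ∫⁻ a, ν' (Prod.mk a ⁻¹' s) ∂μ' :=
      hμ.lintegral_le hsec_mono (measurable_measure_prodMk_left hs_meas) fun _ => measure_ne_top _ _

end StochLE

lemma StochLE.pi {n : ℕ} {α : Fin n → Type*} [∀ i, Preorder (α i)] [∀ i, MeasurableSpace (α i)]
    {μ ν : ∀ i, Measure (α i)} [∀ i, SigmaFinite (μ i)] [∀ i, IsFiniteMeasure (ν i)]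
    (h : ∀ i, StochLE (μ i) (ν i)) : StochLE (Measure.pi μ) (Measure.pi ν) := by
  induction n with
  | zero => rw [Measure.pi_of_empty, Measure.pi_of_empty]; exact fun _ _ _ => le_rfl
  | succ n ih =>
    have hinsert : Monotone (MeasurableEquiv.piFinSuccAbove α 0).symm := by
      intro p q hpq
      simp only [MeasurableEquiv.piFinSuccAbove_symm_apply, Fin.insertNthEquiv, Equiv.coe_fn_mk,
        Fin.insertNth_le_iff, Fin.insertNth_apply_same, Fin.insertNth_apply_succAbove]
      exact hpq
    rw [← (measurePreserving_piFinSuccAbove μ 0).symm.map_eq,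
      ← (measurePreserving_piFinSuccAbove ν 0).symm.map_eq]
    exact ((h 0).prod (ih fun j => h _)).map hinsert (MeasurableEquiv.measurable _)

lemma shiryaevStat_mono (N : ℕ) (hN : 0 < N) {π : Fin N → ℝ} (hπ : ∀ k, 0 < π k) :
    Monotone (shiryaevStat N hN π) := fun _ _ hxy =>
  Finset.sup'_mono_fun fun _ _ => Real.log_le_log
    (Finset.sum_pos (fun k _ => mul_pos (hπ k) (Real.exp_pos _)) Finset.nonempty_Iic)
    (Finset.sum_le_sum fun k _ => mul_le_mul_of_nonneg_left
      (Real.exp_le_exp.2 (Finset.sum_le_sum fun i _ => hxy i)) (hπ k).le)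

lemma measurable_shiryaevStat (N : ℕ) (hN : 0 < N) (π : Fin N → ℝ) :
    Measurable (shiryaevStat N hN π) := by
  unfold shiryaevStat
  fun_prop

lemma ProbabilityTheory.iIndepFun.measure_preimage_eq_pi {Ω ι : Type*} [MeasurableSpace Ω]
    [Fintype ι] {β : ι → Type*} [∀ i, MeasurableSpace (β i)] {P : Measure Ω}
    [IsProbabilityMeasure P] {X : ∀ i, Ω → β i} (hX : iIndepFun X P)
    (hX_meas : ∀ i, Measurable (X i)) {A : Set (∀ i, β i)} (hA : MeasurableSet A) :
    P {ω | (fun i => X i ω) ∈ A} = Measure.pi (fun i => P.map (X i)) A := by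
  rw [← hX.map_fun_eq_pi_map fun i => (hX_meas i).aemeasurable,
    Measure.map_apply (measurable_pi_lambda _ hX_meas) hA]
  rfl

/-- If `π_1,…,π_N` are strictly positive weights, `Y_1,…,Y_N` are mutually
independent, `Z_1,…,Z_N` are mutually independent, and `Z_i` is stochastically larger than
`Y_i` for each `i`, then for every threshold `η`,
`P(max_{1≤n≤N} log (∑_{k=1}^n π_k exp (∑_{i=k}^n Y_i)) ≥ η)
  ≤ P(max_{1≤n≤N} log (∑_{k=1}^n π_k exp (∑_{i=k}^n Z_i)) ≥ η)`. -/
theorem stmt_7 {Ω₁ Ω₂ : Type*} [MeasurableSpace Ω₁] [MeasurableSpace Ω₂]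
    (P₁ : Measure Ω₁) (P₂ : Measure Ω₂)
    [IsProbabilityMeasure P₁] [IsProbabilityMeasure P₂]
    (N : ℕ) (hN : 1 ≤ N) (π : Fin N → ℝ) (hπ : ∀ k, 0 < π k)
    (Y : Fin N → Ω₁ → ℝ) (Z : Fin N → Ω₂ → ℝ)
    (hYmeas : ∀ i, Measurable (Y i)) (hZmeas : ∀ i, Measurable (Z i))
    (hYindep : iIndepFun Y P₁)
    (hZindep : iIndepFun Z P₂)
    (hdom : ∀ (i : Fin N) (t : ℝ), P₁ {ω | t ≤ Y i ω} ≤ P₂ {ω | t ≤ Z i ω}) :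
    ∀ η : ℝ, P₁ {ω | η ≤ shiryaevStat N hN π fun i => Y i ω}
      ≤ P₂ {ω | η ≤ shiryaevStat N hN π fun i => Z i ω} := by
  intro η
  set A : Set (Fin N → ℝ) := {x | η ≤ shiryaevStat N hN π x}
  have hA_meas : MeasurableSet A := measurableSet_le measurable_const (measurable_shiryaevStat ..)
  have hA_upper : IsUpperSet A := fun x y hxy hx => hx.trans (shiryaevStat_mono N hN hπ hxy)
  have hmarginal (i : Fin N) : StochLE (P₁.map (Y i)) (P₂.map (Z i)) :=
    stochLE_of_measure_Ici_le fun t => by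
      rw [Measure.map_apply (hYmeas i) measurableSet_Ici,
        Measure.map_apply (hZmeas i) measurableSet_Ici]
      exact hdom i t
  calc P₁ {ω | η ≤ shiryaevStat N hN π fun i => Y i ω}
      = Measure.pi (fun i => P₁.map (Y i)) A := hYindep.measure_preimage_eq_pi hYmeas hA_meas
    _ ≤ Measure.pi (fun i => P₂.map (Z i)) A := StochLE.pi hmarginal A hA_meas hA_upper
    _ = P₂ {ω | η ≤ shiryaevStat N hN π fun i => Z i ω} :=
      (hZindep.measure_preimage_eq_pi hZmeas hA_meas).symm
end

section
/- Let (𝒳,𝓕) be a measurable space, let L: 𝒳 → ℝ be measurable, let η ∈ ℝ, and let ν0 and ν̄0 be probability measures on 𝒳 such that the pushforward of ν̄0 under L is stochastically larger than the pushforward of ν0 under L. Let τ denote the CUSUM stopping time with statistic L and threshold η, i.e. τ = inf{n ≥ 1 : max_{1≤k≤n} Σ_{i=k}^n L(X_i) ≥ η}, applied to an i.i.d. observation sequence. Then for every N ≥ 1 the crossing probability is larger under ν̄0, i.e. P_∞^{ν̄0}(τ ≤ N) ≥ P_∞^{ν0}(τ ≤ N), and consequently the mean time to false alarm satisfies E_∞^{ν0}[τ]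 ≥ E_∞^{ν̄0}[τ]. -/
open MeasureTheory ProbabilityTheory ENNReal

/-- A probability measure `μ` on `ℝ` is stochastically larger than `μ'` if
`μ [t, ∞) ≥ μ' [t, ∞)` for every `t`. -/
def StochLarger (μ μ' : Measure ℝ) : Prop :=
  ∀ t : ℝ, μ' (Set.Ici t) ≤ μ (Set.Ici t)

/-- The CUSUM statistic `max_{1 ≤ k ≤ n} ∑_{i=k}^n L(X_i)` at time `n ≥ 1`
(junk value `0` for `n = 0`). -/
noncomputable def cusumS {𝒳 : Type*} (L : 𝒳 → ℝ) (ω : ℕ → 𝒳) (n : ℕ) : ℝ :=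
  if h : (Finset.Icc 1 n).Nonempty then
    (Finset.Icc 1 n).sup' h fun k => ∑ i ∈ Finset.Icc k n, L (ω i)
  else 0

/-- The CUSUM stopping time `τ = inf {n ≥ 1 : max_{1 ≤ k ≤ n} ∑_{i=k}^n L(X_i) ≥ η}`,
with value `∞` if the threshold is never crossed. -/
noncomputable def tauC {𝒳 : Type*} (L : 𝒳 → ℝ) (η : ℝ) (ω : ℕ → 𝒳) : ℕ∞ :=
  sInf {m : ℕ∞ | ∃ n : ℕ, m = n ∧ 1 ≤ n ∧ η ≤ cusumS L ω n}

/-!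
The event `{τ ≤ N}` depends only on the observations `L X_1, …, L X_N`, which are i.i.d. with
law `ν.map L`, and it is an upper set in them, since the CUSUM statistic is monotone in every
observation. Stochastic dominance on `ℝ` gives `μ' A ≤ μ A` for every upper set `A ⊆ ℝ` (such a
set is empty, `ℝ`, or a half-line), and Fubini, applied one coordinate at a time, carries this
over to upper sets of product measures. The bound on the mean time to false alarm follows from
the tail-sum formula `E τ = ∑_N P(τ > N)`.
-/

open Set

def StochDominates {α : Type*} [MeasurableSpace α] [Preorder α] (μ μ' : Measure α) : Prop :=
  ∀ ⦃A : Set α⦄, MeasurableSet A → IsUpperSet A → μ' A ≤ μ A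

namespace StochDominates

variable {α β : Type*} [MeasurableSpace α] [Preorder α] [MeasurableSpace β] [Preorder β]

lemma map {μ μ' : Measure α} (h : StochDominates μ μ') {f : α → β} (hf : Measurable f)
    (hmono : Monotone f) : StochDominates (μ.map f) (μ'.map f) := fun A hA hAu => by
  rw [Measure.map_apply hf hA, Measure.map_apply hf hA]
  exact h (hf hA) (hAu.preimage hmono)

lemma prod {μ μ' : Measure α} {ν ν' : Measure β} [SFinite μ] [SFinite μ'] [SFinite ν]
    [SFinite ν'] (hμ : StochDominates μ μ') (hν : StochDominates ν ν') :
    StochDominates (μ.prod ν) (μ'.prod ν') := fun A hA hAu =>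
  calc (μ'.prod ν') A
      = ∫⁻ x, ν' (Prod.mk x ⁻¹' A) ∂μ' := Measure.prod_apply hA
    _ ≤ ∫⁻ x, ν (Prod.mk x ⁻¹' A) ∂μ' := lintegral_mono fun x =>
        hν (measurable_prodMk_left hA) (hAu.preimage (monotone_const.prodMk monotone_id))
    _ = ∫⁻ y, μ' ((·, y) ⁻¹' A) ∂ν := by rw [← Measure.prod_apply hA, Measure.prod_apply_symm hA]
    _ ≤ ∫⁻ y, μ ((·, y) ⁻¹' A) ∂ν := lintegral_mono fun y =>
        hμ (measurable_prodMk_right hA) (hAu.preimage (monotone_id.prodMk monotone_const))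
    _ = (μ.prod ν) A := (Measure.prod_apply_symm hA).symm

lemma pi_fin : ∀ {n : ℕ} {μ μ' : Fin n → Measure α} [∀ i, SigmaFinite (μ i)]
    [∀ i, SigmaFinite (μ' i)], (∀ i, StochDominates (μ i) (μ' i)) →
    StochDominates (Measure.pi μ) (Measure.pi μ')
  | 0, μ, μ', _, _, _ => by
    rw [Measure.pi_of_empty μ, Measure.pi_of_empty μ']
    exact fun _ _ _ => le_rfl
  | n + 1, μ, μ', _, _, h => by
    have e_mono : Monotone (MeasurableEquiv.piFinSuccAbove (fun _ : Fin (n + 1) => α) 0).symm :=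
      fun _ _ hxy => Fin.cases (by simpa [MeasurableEquiv.piFinSuccAbove] using hxy.1)
        fun j => by simpa [MeasurableEquiv.piFinSuccAbove] using hxy.2 j
    rw [← (measurePreserving_piFinSuccAbove μ 0).symm.map_eq,
      ← (measurePreserving_piFinSuccAbove μ' 0).symm.map_eq]
    exact ((h 0).prod (pi_fin fun j => h j.succ)).map (MeasurableEquiv.measurable _) e_mono

lemma pi {ι : Type*} [Fintype ι] {μ μ' : ι → Measure α} [∀ i, SigmaFinite (μ i)]
    [∀ i, SigmaFinite (μ' i)] (h : ∀ i, StochDominates (μ i) (μ' i)) :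
    StochDominates (Measure.pi μ) (Measure.pi μ') := by
  let e := (Fintype.equivFin ι).symm
  have e_mono : Monotone (MeasurableEquiv.piCongrLeft (fun _ => α) e) := fun x y hxy i => by
    obtain ⟨a, rfl⟩ := e.surjective i
    simpa [MeasurableEquiv.piCongrLeft_apply_apply] using hxy a
  rw [← Measure.pi_map_piCongrLeft e μ, ← Measure.pi_map_piCongrLeft e μ']
  exact (pi_fin fun i => h (e i)).map (MeasurableEquiv.measurable _) e_mono

end StochDominates

section UpperSet

variable {α : Type*} [ConditionallyCompleteLinearOrder α] {S : Set α}

lemma IsUpperSet.eq_univ_of_not_bddBelow (hS : IsUpperSet S) (hb : ¬BddBelow S) : S = univ :=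
  eq_univ_of_forall fun x => by
    obtain ⟨y, hyS, hyx⟩ := not_bddBelow_iff.mp hb x
    exact hS hyx.le hyS

lemma IsUpperSet.eq_Ici_or_Ioi_csInf (hS : IsUpperSet S) (hne : S.Nonempty) (hb : BddBelow S) :
    S = Ici (sInf S) ∨ S = Ioi (sInf S) := by
  have hunion : S = ⋃ x ∈ S, Ici x :=
    (iUnion₂_subset fun x (hx : x ∈ S) => hS.Ici_subset hx).antisymm' fun x hx =>
      mem_biUnion hx (mem_Ici.mpr le_rfl)
  by_cases hmem : sInf S ∈ S
  · exact .inl (hunion.trans ((isGLB_csInf hne hb).biUnion_Ici_eq_Ici hmem))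
  · exact .inr (hunion.trans ((isGLB_csInf hne hb).biUnion_Ici_eq_Ioi hmem))

end UpperSet

namespace StochLarger

variable {μ μ' : Measure ℝ}

lemma measure_Ioi_le (h : StochLarger μ μ') (a : ℝ) : μ' (Ioi a) ≤ μ (Ioi a) := by
  obtain ⟨u, hu_anti, hu_gt, hu_lim⟩ := exists_seq_strictAnti_tendsto a
  have hmono : Monotone fun n => Ici (u n) := fun _ _ hmn =>
    Ici_subset_Ici.mpr (hu_anti.antitone hmn)
  rw [← iUnion_Ici_eq_Ioi_of_lt_of_tendsto hu_gt hu_lim, hmono.measure_iUnion, hmono.measure_iUnion]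
  exact iSup_mono fun n => h (u n)

lemma stochDominates [IsProbabilityMeasure μ] [IsProbabilityMeasure μ'] (h : StochLarger μ μ') :
    StochDominates μ μ' := fun S _ hS => by
  rcases S.eq_empty_or_nonempty with rfl | hne
  · simp
  by_cases hb : BddBelow S
  · rcases hS.eq_Ici_or_Ioi_csInf hne hb with hS' | hS' <;> rw [hS']
    · exact h _
    · exact h.measure_Ioi_le _
  · simp [hS.eq_univ_of_not_bddBelow hb]

end StochLarger

section Cusum

variable {𝒳 : Type*}

lemma cusumS_congr {𝒴 : Type*} {L : 𝒳 → ℝ} {L' : 𝒴 → ℝ} {ω : ℕ → 𝒳} {ω' : ℕ → 𝒴} {n : ℕ}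
    (h : ∀ i ∈ Finset.Icc 1 n, L (ω i) = L' (ω' i)) : cusumS L ω n = cusumS L' ω' n := by
  unfold cusumS
  split_ifs with hne
  · refine Finset.sup'_congr hne rfl fun k hk => Finset.sum_congr rfl fun i hi => h i ?_
    simp only [Finset.mem_Icc] at hk hi ⊢
    omega
  · rfl

lemma cusumS_mono {y y' : ℕ → ℝ} (h : y ≤ y') (n : ℕ) : cusumS id y n ≤ cusumS id y' n := by
  unfold cusumS
  split_ifs
  · exact Finset.sup'_mono_fun fun k _ => Finset.sum_le_sum fun i _ => h i
  · exact le_rfl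

lemma measurable_cusumS {β : Type*} [MeasurableSpace β] {y : β → ℕ → ℝ}
    (hy : ∀ i, Measurable fun b => y b i) (n : ℕ) : Measurable fun b => cusumS id (y b) n := by
  unfold cusumS
  split_ifs with hne
  · convert Finset.measurable_sup' hne (f := fun k b => ∑ i ∈ Finset.Icc k n, y b i)
      fun k _ => Finset.measurable_sum _ fun i _ => hy i using 1
    ext b
    rw [Finset.sup'_apply]
    rfl
  · exact measurable_const

lemma tauC_le_of_crossing {L : 𝒳 → ℝ} {η : ℝ} {ω : ℕ → 𝒳} {n : ℕ} (h1 : 1 ≤ n)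
    (hcross : η ≤ cusumS L ω n) : tauC L η ω ≤ n :=
  sInf_le ⟨n, rfl, h1, hcross⟩

lemma tauC_le_iff (L : 𝒳 → ℝ) (η : ℝ) (ω : ℕ → 𝒳) (N : ℕ) :
    tauC L η ω ≤ N ↔ ∃ n ∈ Finset.Icc 1 N, η ≤ cusumS L ω n := by
  simp only [Finset.mem_Icc]
  constructor
  · intro hle
    have hne : {m : ℕ∞ | ∃ n : ℕ, m = n ∧ 1 ≤ n ∧ η ≤ cusumS L ω n}.Nonempty := by
      by_contra hempty
      simp [tauC, Set.not_nonempty_iff_eq_empty.mp hempty] at hle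
    obtain ⟨n, hn, h1, hcross⟩ := csInf_mem hne
    rw [tauC, hn, Nat.cast_le] at hle
    exact ⟨n, ⟨h1, hle⟩, hcross⟩
  · rintro ⟨n, ⟨h1, hn⟩, hcross⟩
    exact (tauC_le_of_crossing h1 hcross).trans (Nat.cast_le.mpr hn)

end Cusum

def extendByZero (s : Finset ℕ) (y : s → ℝ) (m : ℕ) : ℝ :=
  if h : m ∈ s then y ⟨m, h⟩ else 0

def cusumCrossing (η : ℝ) (N : ℕ) : Set (Finset.Icc 1 N → ℝ) :=
  ⋃ n ∈ Finset.Icc 1 N, {y | η ≤ cusumS id (extendByZero _ y) n}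

lemma isUpperSet_cusumCrossing (η : ℝ) (N : ℕ) : IsUpperSet (cusumCrossing η N) :=
  isUpperSet_iUnion₂ fun n _ y y' hyy' hcross => hcross.trans <| cusumS_mono (fun m => by
    unfold extendByZero
    split_ifs
    exacts [hyy' _, le_rfl]) n

lemma measurableSet_cusumCrossing (η : ℝ) (N : ℕ) : MeasurableSet (cusumCrossing η N) := by
  have hext : ∀ m, Measurable fun y : Finset.Icc 1 N → ℝ => extendByZero _ y m := fun m => by
    unfold extendByZero
    split_ifs
    exacts [measurable_pi_apply _, measurable_const]
  exact Finset.measurableSet_biUnion _ fun n _ =>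
    measurableSet_le measurable_const (measurable_cusumS hext n)

lemma setOf_tauC_le_eq_preimage {𝒳 : Type*} (L : 𝒳 → ℝ) (η : ℝ) (N : ℕ) :
    {ω | tauC L η ω ≤ N} = (fun ω (i : Finset.Icc 1 N) => L (ω i)) ⁻¹' cusumCrossing η N := by
  ext ω
  simp only [mem_ofPred_eq, mem_preimage, tauC_le_iff, cusumCrossing, mem_iUnion₂, exists_prop]
  refine exists_congr fun n => and_congr_right fun hn => ?_
  rw [cusumS_congr fun i hi => ?_]
  simp only [Finset.mem_Icc] at hn hi
  rw [id, extendByZero, dif_pos (Finset.mem_Icc.mpr ⟨hi.1, hi.2.trans hn.2⟩)]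

lemma measurableSet_setOf_tauC_le {𝒳 : Type*} [MeasurableSpace 𝒳] {L : 𝒳 → ℝ}
    (hL : Measurable L) (η : ℝ) (N : ℕ) : MeasurableSet {ω : ℕ → 𝒳 | tauC L η ω ≤ N} := by
  rw [setOf_tauC_le_eq_preimage]
  exact measurableSet_cusumCrossing η N |>.preimage <|
    measurable_pi_lambda _ fun i => hL.comp (measurable_pi_apply _)

lemma map_comp_eval_eq_pi {𝒳 β : Type*} [MeasurableSpace 𝒳] [MeasurableSpace β] {L : 𝒳 → β}
    (hL : Measurable L) {ν : Measure 𝒳} {P : Measure (ℕ → 𝒳)} [IsProbabilityMeasure P]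
    (hind : iIndepFun (fun n ω => ω n) P) {s : Finset ℕ}
    (hmarg : ∀ n ∈ s, P.map (fun ω => ω n) = ν) :
    P.map (fun ω (i : s) => L (ω i)) = Measure.pi fun _ => ν.map L := by
  have hind' : iIndepFun (fun (i : s) ω => L (ω i)) P :=
    (hind.precomp Subtype.val_injective).comp (fun _ => L) fun _ => hL
  have hmeas (i : s) : AEMeasurable (fun ω : ℕ → 𝒳 => L (ω i)) P :=
    (hL.comp (measurable_pi_apply _)).aemeasurable
  rw [hind'.map_fun_eq_pi_map hmeas]
  congr with i : 1
  rw [← hmarg i i.2, Measure.map_map hL (measurable_pi_apply _)]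
  rfl

lemma ENat.toENNReal_eq_tsum_ite (m : ℕ∞) :
    (m : ℝ≥0∞) = ∑' N : ℕ, if (N : ℕ∞) < m then 1 else 0 := by
  induction m with
  | top => simp
  | coe k =>
    rw [tsum_eq_sum (s := Finset.range k) fun N hN => by simpa using hN]
    simp [Finset.filter_true_of_mem fun N hN => Finset.mem_range.mp hN]

lemma lintegral_toENNReal_eq_tsum_measure_lt {α : Type*} [MeasurableSpace α] (μ : Measure α)
    {τ : α → ℕ∞} (hτ : ∀ N : ℕ, MeasurableSet {ω | (N : ℕ∞) < τ ω}) :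
    ∫⁻ ω, (τ ω : ℝ≥0∞) ∂μ = ∑' N : ℕ, μ {ω | (N : ℕ∞) < τ ω} := by
  have hind (N : ℕ) (ω : α) : (if (N : ℕ∞) < τ ω then (1 : ℝ≥0∞) else 0) =
      {ω | (N : ℕ∞) < τ ω}.indicator 1 ω := by
    simp [Set.indicator_apply]
  simp_rw [ENat.toENNReal_eq_tsum_ite, hind]
  rw [lintegral_tsum fun N => (measurable_one.indicator (hτ N)).aemeasurable]
  simp_rw [lintegral_indicator_one (hτ _)]

lemma measure_tauC_le_le_of_stochLarger {𝒳 : Type*} [MeasurableSpace 𝒳] {L : 𝒳 → ℝ}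
    (hL : Measurable L) (η : ℝ) {ν ν' : Measure 𝒳}
    [IsProbabilityMeasure ν] [IsProbabilityMeasure ν'] (hdom : StochLarger (ν.map L) (ν'.map L))
    {P P' : Measure (ℕ → 𝒳)} [IsProbabilityMeasure P] [IsProbabilityMeasure P']
    (hind : iIndepFun (fun n ω => ω n) P) (hind' : iIndepFun (fun n ω => ω n) P')
    (hmarg : ∀ n, 1 ≤ n → P.map (fun ω => ω n) = ν)
    (hmarg' : ∀ n, 1 ≤ n → P'.map (fun ω => ω n) = ν') (N : ℕ) :
    P' {ω | tauC L η ω ≤ N} ≤ P {ω | tauC L η ω ≤ N} := by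
  have : IsProbabilityMeasure (ν.map L) := Measure.isProbabilityMeasure_map hL.aemeasurable
  have : IsProbabilityMeasure (ν'.map L) := Measure.isProbabilityMeasure_map hL.aemeasurable
  have hobs : Measurable fun (ω : ℕ → 𝒳) (i : Finset.Icc 1 N) => L (ω i) :=
    measurable_pi_lambda _ fun i => hL.comp (measurable_pi_apply _)
  have hC := measurableSet_cusumCrossing η N
  rw [setOf_tauC_le_eq_preimage, ← Measure.map_apply hobs hC, ← Measure.map_apply hobs hC,
    map_comp_eval_eq_pi hL hind fun n hn => hmarg n (Finset.mem_Icc.mp hn).1,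
    map_comp_eval_eq_pi hL hind' fun n hn => hmarg' n (Finset.mem_Icc.mp hn).1]
  exact StochDominates.pi (fun _ => hdom.stochDominates) hC (isUpperSet_cusumCrossing η N)

/-- Let `L : 𝒳 → ℝ` be measurable, `η ∈ ℝ`, and let `ν0, ν̄0` be probability
measures on `𝒳` such that the pushforward of `ν̄0` under `L` is stochastically larger than that
of `ν0`.  Let `τ` be the CUSUM stopping time with statistic `L` and threshold `η`, applied to an
i.i.d. observation sequence.  Then for every `N ≥ 1`, `P_∞^{ν̄0}(τ ≤ N) ≥ P_∞^{ν0}(τ ≤ N)`, and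
consequently `E_∞^{ν0}[τ] ≥ E_∞^{ν̄0}[τ]`. -/
theorem stmt_8 {𝒳 : Type*} [MeasurableSpace 𝒳]
    (L : 𝒳 → ℝ) (hL : Measurable L) (η : ℝ)
    (ν0 νb0 : Measure 𝒳) [IsProbabilityMeasure ν0] [IsProbabilityMeasure νb0]
    (hdom : StochLarger (νb0.map L) (ν0.map L))
    -- `Pinf` and `Pbinf` are the i.i.d. laws of the observation sequence under `ν0` and `ν̄0`
    (Pinf Pbinf : Measure (ℕ → 𝒳)) [IsProbabilityMeasure Pinf] [IsProbabilityMeasure Pbinf]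
    (hPindep : iIndepFun (fun (n : ℕ) (ω : ℕ → 𝒳) => ω n) Pinf)
    (hPbindep : iIndepFun (fun (n : ℕ) (ω : ℕ → 𝒳) => ω n) Pbinf)
    (hPmarg : ∀ n : ℕ, 1 ≤ n → Pinf.map (fun ω => ω n) = ν0)
    (hPbmarg : ∀ n : ℕ, 1 ≤ n → Pbinf.map (fun ω => ω n) = νb0) :
    (∀ N : ℕ, 1 ≤ N →
      Pinf {ω | tauC L η ω ≤ (N : ℕ∞)} ≤ Pbinf {ω | tauC L η ω ≤ (N : ℕ∞)}) ∧
    ∫⁻ ω, (tauC L η ω : ℝ≥0∞) ∂Pbinf ≤ ∫⁻ ω, (tauC L η ω : ℝ≥0∞) ∂Pinf := by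
  have hcross (N : ℕ) := measure_tauC_le_le_of_stochLarger hL η hdom hPbindep hPindep hPbmarg
    hPmarg N
  have hmeas := measurableSet_setOf_tauC_le hL η
  have hlt (N : ℕ) : {ω : ℕ → 𝒳 | (N : ℕ∞) < tauC L η ω} = {ω | tauC L η ω ≤ N}ᶜ := by
    ext ω
    simp
  refine ⟨fun N _ => hcross N, ?_⟩
  simp_rw [lintegral_toENNReal_eq_tsum_measure_lt _ fun N => hlt N ▸ (hmeas N).compl, hlt,
    prob_compl_eq_one_sub (hmeas _)]
  exact ENNReal.tsum_le_tsum fun N => tsub_le_tsub_left (hcross N) 1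
end

section
/- (Core estimate in the proof of Theorem 2, stated for the Shiryaev–Roberts procedure with fixed initial value r.) Let (𝒳,𝓕) be a measurable space, ν0 and ν̲1 probability measures with ν̲1 ≪ ν0, and L* = log(dν̲1/dν0) continuous on the support of ν0. Let ν1 be a probability measure such that the pushforward of ν1 under L* is stochastically larger than the pushforward of ν̲1 under L*. Fix r ≥ 0, define R_0 = r and R_n = e^{L*(X_n)}(1 + R_{n−1}) for n ≥ 1, and let τ_r = inf{n ≥ 1 : R_n ≥ η} for a threshold η. Then for every change point λ ≥ 1 and every integer N ≥ 1 with P_λ^{ν0,ν̲1}(τ_r ≥ λ) > 0, P_λ^{ν0,ν̲1}( τ_r − λ ≤ N | τ_r ≥ λ ) ≤ P_λ^{ν0,ν1}( τ_r − λ ≤ N | τ_r ≥ λ ); consequently E_λ^{ν0,ν̲1}[ τ_r − λ | τ_r ≥ λ ] ≥ E_λ^{ν0,ν1}[ τ_r − λ | τ_r ≥ λ ]. -/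
open MeasureTheory ProbabilityTheory ENNReal

/-- The (topological) support of a measure: points all of whose open neighbourhoods have
positive measure. -/
def measSupport {𝒳 : Type*} [TopologicalSpace 𝒳] [MeasurableSpace 𝒳] (μ : Measure 𝒳) :
    Set 𝒳 :=
  {x | ∀ U : Set 𝒳, IsOpen U → x ∈ U → 0 < μ U}

/-- The Shiryaev–Roberts statistic with initial value `r`:
`R_0 = r` and `R_n = exp (L(X_n)) (1 + R_{n−1})` for `n ≥ 1`. -/
noncomputable def srProc {𝒳 : Type*} (r : ℝ) (L : 𝒳 → ℝ) (ω : ℕ → 𝒳) : ℕ → ℝ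
  | 0 => r
  | n + 1 => Real.exp (L (ω (n + 1))) * (1 + srProc r L ω n)

/-- The Shiryaev–Roberts (SR-`r`) stopping time `τ_r = inf {n ≥ 1 : R_n ≥ η}`. -/
noncomputable def tauSR {𝒳 : Type*} (r : ℝ) (L : 𝒳 → ℝ) (η : ℝ) (ω : ℕ → 𝒳) : ℕ∞ :=
  sInf {m : ℕ∞ | ∃ n : ℕ, m = n ∧ 1 ≤ n ∧ η ≤ srProc r L ω n}

/-!
Write `τ` for the SR-`r` stopping time and `Y_n = L*(X_n)`. The events `{λ ≤ τ}` and
`{τ ≤ λ + N}` are determined by `Y_1, …, Y_{λ+N}`, whose joint law is the product of their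
marginal laws. The first event only involves the pre-change observations, which have the same
law under both measures, so it has the same probability. Since `r ≥ 0`, every `R_n` is increasing
in each `Y_k`, so the intersection of the two events is increasing in every post-change
coordinate; replacing these coordinates one at a time by stochastically larger ones can only
increase its probability. The comparison of expectations then follows from
`E[Z] = ∑ₖ P(Z > k)` for `ℕ∞`-valued `Z`.
-/

open Set Filter Function

namespace StochLarger

variable {μ ν : Measure ℝ}

lemma measure_iUnion_Ici_le (h : StochLarger ν μ) {a : ℕ → ℝ} (ha : Antitone a) :
    μ (⋃ n, Ici (a n)) ≤ ν (⋃ n, Ici (a n)) := by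
  have hmono : Monotone fun n => Ici (a n) := fun _ _ hmn => Ici_subset_Ici.2 (ha hmn)
  rw [hmono.measure_iUnion, hmono.measure_iUnion]
  exact iSup_mono fun n => h _

lemma measure_le_of_isUpperSet (h : StochLarger ν μ) {S : Set ℝ} (hS : IsUpperSet S) :
    μ S ≤ ν S := by
  rcases S.eq_empty_or_nonempty with rfl | hne
  · simp
  by_cases hb : BddBelow S
  · have hIoi : Ioi (sInf S) ⊆ S := fun x hx =>
      let ⟨s, hs, hsx⟩ := (csInf_lt_iff hb hne).1 hx
      hS hsx.le hs
    have hIci : S ⊆ Ici (sInf S) := fun x hx => csInf_le hb hx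
    by_cases hmin : sInf S ∈ S
    · rw [hIci.antisymm (hS.Ici_subset hmin)]
      exact h _
    · have hU : ⋃ n : ℕ, Ici (sInf S + 1 / ((n : ℝ) + 1)) = S := by
        rw [iUnion_Ici_eq_Ioi_of_lt_of_tendsto (a := sInf S) (F := atTop)
          (fun n => by simp only [lt_add_iff_pos_right]; positivity)
          (by simpa using tendsto_one_div_add_atTop_nhds_zero_nat.const_add (sInf S))]
        exact hIoi.antisymm fun x hx => (hIci hx).lt_of_ne fun e : sInf S = x => hmin (e ▸ hx)
      rw [← hU]
      exact h.measure_iUnion_Ici_le fun m n hmn => by gcongr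
  · have hS_univ : S = univ := eq_univ_of_forall fun x =>
      let ⟨s, hs, hsx⟩ := not_bddBelow_iff.1 hb x
      hS hsx.le hs
    have hU : ⋃ n : ℕ, Ici (-(n : ℝ)) = S := hS_univ ▸ eq_univ_of_forall fun x =>
      mem_iUnion.2 ⟨⌈-x⌉₊, mem_Ici.2 (neg_le.2 (Nat.le_ceil _))⟩
    rw [← hU]
    exact h.measure_iUnion_Ici_le fun m n hmn => by simpa using hmn

lemma lintegral_le_of_monotone (h : StochLarger ν μ) {g : ℝ → ℝ≥0∞} (hg : Monotone g) :
    ∫⁻ x, g x ∂μ ≤ ∫⁻ x, g x ∂ν := by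
  -- layer cake for the truncations `min g n`, whose superlevel sets are upper sets
  have htrunc : ∀ n : ℕ, ∫⁻ x, min (g x) n ∂μ ≤ ∫⁻ x, min (g x) n ∂ν := by
    intro n
    set f : ℝ → ℝ := fun x => (min (g x) n).toReal
    have hfin : ∀ x, min (g x) n ≠ ∞ := fun x =>
      ne_top_of_le_ne_top (natCast_ne_top n) (min_le_right _ _)
    have hf : Monotone f := fun a b hab =>
      ENNReal.toReal_mono (hfin b) (min_le_min_right _ (hg hab))
    have hcake : ∀ ρ : Measure ℝ, ∫⁻ x, min (g x) n ∂ρ = ∫⁻ t in Set.Ioi 0, ρ {x | t < f x} :=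
      fun ρ => by
        rw [← lintegral_eq_lintegral_meas_lt _ (ae_of_all _ fun _ => toReal_nonneg)
          hf.measurable.aemeasurable]
        exact lintegral_congr fun x => (ofReal_toReal (hfin x)).symm
    rw [hcake μ, hcake ν]
    exact lintegral_mono fun t =>
      h.measure_le_of_isUpperSet fun a b hab ha => ha.trans_le (hf hab)
  have hsup : g = fun x => ⨆ n : ℕ, min (g x) n := funext fun x => by
    rw [← inf_iSup_eq, ENNReal.iSup_natCast, inf_top_eq]
  have hmeas : ∀ n : ℕ, Measurable fun x => min (g x) n := fun n =>
    hg.measurable.min measurable_const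
  have hmono : Monotone fun (n : ℕ) x => min (g x) n := fun m n hmn x =>
    min_le_min_left _ (Nat.cast_le.2 hmn)
  rw [hsup, lintegral_iSup hmeas hmono, lintegral_iSup hmeas hmono]
  exact iSup_mono htrunc

end StochLarger

lemma Function.updateFinset_update {ι : Type*} [DecidableEq ι] {π : ι → Type*} (z : ∀ i, π i)
    (s : Finset ι) (x : ∀ i : s, π i) (i : s) (t : π i) :
    updateFinset z s (update x i t) = update (updateFinset z s x) i t := by
  ext j
  rcases eq_or_ne j i with rfl | hji
  · simp [updateFinset]
  · by_cases hj : j ∈ s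
    · simp [updateFinset, hj, hji, update_of_ne (Subtype.coe_ne_coe.1 hji : (⟨j, hj⟩ : s) ≠ i)]
    · simp [updateFinset, hj, hji]

section Product

variable {ι : Type*} [Fintype ι] [DecidableEq ι] {μ ν : ι → Measure ℝ}
  [∀ i, SigmaFinite (μ i)] [∀ i, SigmaFinite (ν i)]

lemma lintegral_pi_le_of_stochLarger {f : (ι → ℝ) → ℝ≥0∞} (hf : Measurable f)
    (h : ∀ i, μ i = ν i ∨ StochLarger (ν i) (μ i) ∧ ∀ x, Monotone fun t => f (update x i t)) :
    ∫⁻ x, f x ∂Measure.pi μ ≤ ∫⁻ x, f x ∂Measure.pi ν := by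
  suffices ∀ (s : Finset ι) x, (∫⋯∫⁻_s, f ∂μ) x ≤ (∫⋯∫⁻_s, f ∂ν) x by
    simpa only [lintegral_eq_lmarginal_univ 0] using this Finset.univ 0
  intro s
  induction s using Finset.induction_on with
  | empty => simp
  | insert i s hi ih =>
    intro x
    rw [lmarginal_insert _ hf hi, lmarginal_insert _ hf hi]
    calc ∫⁻ t, (∫⋯∫⁻_s, f ∂μ) (update x i t) ∂μ i
        ≤ ∫⁻ t, (∫⋯∫⁻_s, f ∂ν) (update x i t) ∂μ i := lintegral_mono fun t => ih _
      _ ≤ ∫⁻ t, (∫⋯∫⁻_s, f ∂ν) (update x i t) ∂ν i := by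
        rcases h i with heq | ⟨hdom, hmono⟩
        · rw [heq]
        · refine hdom.lintegral_le_of_monotone fun t t' htt' => ?_
          rw [lmarginal_update_of_notMem hf hi, lmarginal_update_of_notMem hf hi]
          exact lmarginal_mono (fun z => hmono z htt') x

lemma measure_pi_le_of_stochLarger {E : Set (ι → ℝ)} (hE : MeasurableSet E)
    (h : ∀ i, μ i = ν i ∨ StochLarger (ν i) (μ i) ∧ ∀ x, IsUpperSet {t | update x i t ∈ E}) :
    Measure.pi μ E ≤ Measure.pi ν E := by
  have hmono : ∀ i x, IsUpperSet {t | update x i t ∈ E} →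
      Monotone fun t => E.indicator (1 : (ι → ℝ) → ℝ≥0∞) (update x i t) := by
    intro i x hup t t' htt'
    dsimp only
    by_cases ht : update x i t ∈ E
    · simp [ht, show update x i t' ∈ E from hup htt' ht]
    · simp [ht]
  simpa only [lintegral_indicator_one hE] using lintegral_pi_le_of_stochLarger
    (measurable_one.indicator hE) fun i =>
      (h i).imp_right fun h => ⟨h.1, fun x => hmono i x (h.2 x)⟩

end Product

section ProductLaw

variable {ι 𝒳 : Type*} [MeasurableSpace 𝒳] [DecidableEq ι]

-- `updateFinset 0 s x` pads `x` with zeros outside `s`, which `E` does not see.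
lemma measure_comp_mem_eq_pi {P : Measure (ι → 𝒳)}
    (hP : iIndepFun (fun i (ω : ι → 𝒳) => ω i) P) {L : 𝒳 → ℝ} (hL : Measurable L)
    {s : Finset ι} {E : Set (ι → ℝ)} (hE : MeasurableSet E) (hEs : DependsOn (· ∈ E) s) :
    P {ω | L ∘ ω ∈ E} = Measure.pi (fun i : s => (P.map fun ω => ω i).map L)
      {x | updateFinset (0 : ι → ℝ) s x ∈ E} := by
  have hmeas : Measurable fun (ω : ι → 𝒳) (i : s) => L (ω i) :=
    measurable_pi_lambda _ fun i => hL.comp (measurable_pi_apply _)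
  have hlaw : P.map (fun ω (i : s) => L (ω i))
      = Measure.pi fun i : s => (P.map fun ω => ω i).map L := by
    refine (((hP.precomp Subtype.val_injective).comp (fun _ => L) fun _ => hL).map_fun_eq_pi_map
      fun i => (hL.comp (measurable_pi_apply _)).aemeasurable).trans ?_
    congr with i : 1
    exact (Measure.map_map hL (measurable_pi_apply _)).symm
  rw [← hlaw, Measure.map_apply hmeas (show MeasurableSet {x | updateFinset (0 : ι → ℝ) s x ∈ E}
    from measurable_updateFinset hE)]
  congr with ω
  exact (hEs fun i hi => by simp [updateFinset, Finset.mem_coe.1 hi]).to_iff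

end ProductLaw

section ShiryaevRoberts

variable {𝒳 : Type*} {r η : ℝ} {L : 𝒳 → ℝ}

lemma srProc_nonneg (hr : 0 ≤ r) (L : 𝒳 → ℝ) (ω : ℕ → 𝒳) : ∀ n, 0 ≤ srProc r L ω n
  | 0 => hr
  | n + 1 => mul_nonneg (Real.exp_pos _).le (by linarith [srProc_nonneg hr L ω n])

lemma srProc_comp (r : ℝ) (L : 𝒳 → ℝ) (ω : ℕ → 𝒳) : srProc r L ω = srProc r id (L ∘ ω) := by
  funext n
  induction n with
  | zero => rfl
  | succ n ih => simp only [srProc, ih, id, comp_apply]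

lemma dependsOn_srProc (r : ℝ) (L : 𝒳 → ℝ) (n : ℕ) :
    DependsOn (fun ω => srProc r L ω n) (Icc 1 n) := by
  induction n with
  | zero => exact fun _ _ _ => rfl
  | succ n ih =>
    intro ω ω' h
    simp only [srProc, h (n + 1) ⟨by omega, le_rfl⟩, ih fun k hk => h k ⟨hk.1, by grind⟩]

lemma monotone_srProc (hr : 0 ≤ r) (n : ℕ) : Monotone fun y : ℕ → ℝ => srProc r id y n := by
  induction n with
  | zero => exact monotone_const
  | succ n ih =>
    intro y y' hy
    exact mul_le_mul (Real.exp_le_exp.2 (hy _)) (by linarith [ih hy])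
      (by linarith [srProc_nonneg hr id y n]) (Real.exp_pos _).le

lemma measurable_srProc [MeasurableSpace 𝒳] (hL : Measurable L) (r : ℝ) (n : ℕ) :
    Measurable fun ω : ℕ → 𝒳 => srProc r L ω n := by
  induction n with
  | zero => exact measurable_const
  | succ n ih =>
    exact (Real.measurable_exp.comp (hL.comp (measurable_pi_apply _))).mul
      (measurable_const.add ih)

lemma tauSR_comp (r : ℝ) (L : 𝒳 → ℝ) (η : ℝ) (ω : ℕ → 𝒳) :
    tauSR r L η ω = tauSR r id η (L ∘ ω) := by
  rw [tauSR, tauSR, srProc_comp]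

lemma tauSR_le_iff {ω : ℕ → 𝒳} {K : ℕ} :
    tauSR r L η ω ≤ K ↔ ∃ n, 1 ≤ n ∧ n ≤ K ∧ η ≤ srProc r L ω n := by
  constructor
  · intro h
    obtain ⟨m, ⟨n, rfl, h1, hη⟩, hlt⟩ :=
      sInf_lt_iff.1 (h.trans_lt (ENat.natCast_lt_natCast.2 K.lt_succ_self))
    exact ⟨n, h1, Nat.lt_succ_iff.1 (ENat.natCast_lt_natCast.1 hlt), hη⟩
  · rintro ⟨n, h1, hK, hη⟩
    exact (sInf_le (show (n : ℕ∞) ∈ {m : ℕ∞ | ∃ n : ℕ, m = n ∧ 1 ≤ n ∧ η ≤ srProc r L ω n} from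
      ⟨n, rfl, h1, hη⟩)).trans (ENat.natCast_le_natCast.2 hK)

lemma le_tauSR_iff {ω : ℕ → 𝒳} {lam : ℕ} :
    lam ≤ tauSR r L η ω ↔ ∀ n, 1 ≤ n → n < lam → srProc r L ω n < η := by
  simp only [tauSR, le_sInf_iff, mem_ofPred_eq, forall_exists_index, and_imp]
  rw [forall_comm]
  simp only [forall_eq, Nat.cast_le]
  exact forall₂_congr fun n _ => by rw [← not_imp_not, not_le, not_le]

lemma dependsOn_tauSR_le (r : ℝ) (L : 𝒳 → ℝ) (η : ℝ) (K : ℕ) :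
    DependsOn (fun ω => tauSR r L η ω ≤ K) (Icc 1 K) := fun ω ω' h => by
  simp only [tauSR_le_iff]
  exact propext <| exists_congr fun n => and_congr_right fun h1 => and_congr_right fun hn => by
    rw [show srProc r L ω n = _ from dependsOn_srProc r L n fun k hk => h k ⟨hk.1, hk.2.trans hn⟩]

lemma dependsOn_le_tauSR (r : ℝ) (L : 𝒳 → ℝ) (η : ℝ) (lam : ℕ) :
    DependsOn (fun ω => lam ≤ tauSR r L η ω) (Ico 1 lam) := fun ω ω' h => by
  simp only [le_tauSR_iff]
  exact propext <| forall₃_congr fun n h1 hn => by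
    rw [show srProc r L ω n = _ from
      dependsOn_srProc r L n fun k hk => h k ⟨hk.1, hk.2.trans_lt hn⟩]

lemma isUpperSet_tauSR_le (hr : 0 ≤ r) (η : ℝ) (K : ℕ) :
    IsUpperSet {y : ℕ → ℝ | tauSR r id η y ≤ K} := fun y y' hy h => by
  obtain ⟨n, h1, hn, hη⟩ := tauSR_le_iff.1 h
  exact tauSR_le_iff.2 ⟨n, h1, hn, hη.trans (monotone_srProc hr n hy)⟩

variable [MeasurableSpace 𝒳]

lemma measurableSet_tauSR_le (hL : Measurable L) (r η : ℝ) (K : ℕ) :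
    MeasurableSet {ω : ℕ → 𝒳 | tauSR r L η ω ≤ K} := by
  simp only [tauSR_le_iff]
  exact measurableSet_setOfPred.2 <| .exists fun n =>
    measurable_const.and <| measurable_const.and <| measurableSet_setOfPred.1 <|
      measurableSet_le measurable_const (measurable_srProc hL r n)

lemma measurableSet_le_tauSR (hL : Measurable L) (r η : ℝ) (lam : ℕ) :
    MeasurableSet {ω : ℕ → 𝒳 | lam ≤ tauSR r L η ω} := by
  simp only [le_tauSR_iff]
  exact measurableSet_setOfPred.2 <| .forall fun n =>
    measurable_const.imp <| measurable_const.imp <| measurableSet_setOfPred.1 <|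
      measurableSet_lt (measurable_srProc hL r n) measurable_const

lemma measurableSet_tauSR_sub_le (hL : Measurable L) (r η : ℝ) (lam N : ℕ) :
    MeasurableSet {ω : ℕ → 𝒳 | tauSR r L η ω - lam ≤ N} := by
  simpa only [tsub_le_iff_right, Nat.cast_add] using measurableSet_tauSR_le hL r η (N + lam)

end ShiryaevRoberts

section ChangePoint

variable {𝒳 : Type*} [MeasurableSpace 𝒳]

-- The law `P_λ^{μ,γ}`; the coordinate `ω 0` is unconstrained, as `R_n` never reads it.
def IsChangePointLaw (P : Measure (ℕ → 𝒳)) (lam : ℕ) (μ γ : Measure 𝒳) : Prop :=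
  iIndepFun (fun (n : ℕ) (ω : ℕ → 𝒳) => ω n) P ∧
    ∀ n : ℕ, 1 ≤ n → P.map (fun ω => ω n) = if n < lam then μ else γ

variable {ν0 ν1u ν1 : Measure 𝒳} {L : 𝒳 → ℝ} {lam : ℕ} {P₁ P₂ : Measure (ℕ → 𝒳)}

lemma measure_comp_mem_le_of_stochLarger (hL : Measurable L)
    (hdom : StochLarger (ν1.map L) (ν1u.map L)) (hP₁ : IsChangePointLaw P₁ lam ν0 ν1u)
    (hP₂ : IsChangePointLaw P₂ lam ν0 ν1) {M : ℕ} {E : Set (ℕ → ℝ)} (hE : MeasurableSet E)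
    (hEM : DependsOn (· ∈ E) (Icc 1 M))
    (hup : ∀ i, lam ≤ i → ∀ y, IsUpperSet {t | update y i t ∈ E}) :
    P₁ {ω | L ∘ ω ∈ E} ≤ P₂ {ω | L ∘ ω ∈ E} := by
  have hEM' : DependsOn (· ∈ E) (Finset.Icc 1 M : Set ℕ) := by rwa [Finset.coe_Icc]
  have := hP₁.1.isProbabilityMeasure
  have := hP₂.1.isProbabilityMeasure
  rw [measure_comp_mem_eq_pi hP₁.1 hL hE hEM', measure_comp_mem_eq_pi hP₂.1 hL hE hEM']
  refine measure_pi_le_of_stochLarger (measurable_updateFinset hE) fun i => ?_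
  have hi := (Finset.mem_Icc.1 i.2).1
  rw [hP₁.2 i hi, hP₂.2 i hi]
  split_ifs with hlt
  · exact Or.inl rfl
  · refine Or.inr ⟨hdom, fun x => ?_⟩
    simpa only [mem_ofPred_eq, updateFinset_update] using
      hup i (not_lt.1 hlt) (updateFinset 0 _ x)

lemma measure_comp_mem_eq_of_dependsOn_lt (hL : Measurable L)
    (hP₁ : IsChangePointLaw P₁ lam ν0 ν1u) (hP₂ : IsChangePointLaw P₂ lam ν0 ν1)
    {E : Set (ℕ → ℝ)} (hE : MeasurableSet E) (hElam : DependsOn (· ∈ E) (Ico 1 lam)) :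
    P₁ {ω | L ∘ ω ∈ E} = P₂ {ω | L ∘ ω ∈ E} := by
  have hElam' : DependsOn (· ∈ E) (Finset.Ico 1 lam : Set ℕ) := by rwa [Finset.coe_Ico]
  rw [measure_comp_mem_eq_pi hP₁.1 hL hE hElam', measure_comp_mem_eq_pi hP₂.1 hL hE hElam']
  congr with i : 2
  obtain ⟨hi, hlt⟩ := Finset.mem_Ico.1 i.2
  rw [hP₁.2 i hi, hP₂.2 i hi, if_pos hlt, if_pos hlt]

variable {r : ℝ}

lemma measure_le_tauSR_eq (hL : Measurable L) (η : ℝ) (hP₁ : IsChangePointLaw P₁ lam ν0 ν1u)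
    (hP₂ : IsChangePointLaw P₂ lam ν0 ν1) :
    P₁ {ω | lam ≤ tauSR r L η ω} = P₂ {ω | lam ≤ tauSR r L η ω} := by
  simp only [tauSR_comp r L η]
  exact measure_comp_mem_eq_of_dependsOn_lt hL hP₁ hP₂ (E := {y | lam ≤ tauSR r id η y})
    (measurableSet_le_tauSR measurable_id r η lam) (dependsOn_le_tauSR r id η lam)

lemma measure_tauSR_sub_le_inter_le_tauSR_le (hL : Measurable L)
    (hdom : StochLarger (ν1.map L) (ν1u.map L)) (hr : 0 ≤ r) (η : ℝ)
    (hP₁ : IsChangePointLaw P₁ lam ν0 ν1u) (hP₂ : IsChangePointLaw P₂ lam ν0 ν1) (N : ℕ) :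
    P₁ ({ω | tauSR r L η ω - lam ≤ N} ∩ {ω | lam ≤ tauSR r L η ω})
      ≤ P₂ ({ω | tauSR r L η ω - lam ≤ N} ∩ {ω | lam ≤ tauSR r L η ω}) := by
  have hsub : ∀ m : ℕ∞, m - lam ≤ N ↔ m ≤ (N + lam : ℕ) := fun m => by
    rw [tsub_le_iff_right, Nat.cast_add]
  simp only [hsub, tauSR_comp r L η]
  refine measure_comp_mem_le_of_stochLarger hL hdom hP₁ hP₂
    (E := {y | tauSR r id η y ≤ (N + lam : ℕ)} ∩ {y | lam ≤ tauSR r id η y})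
    ((measurableSet_tauSR_le measurable_id r η _).inter
      (measurableSet_le_tauSR measurable_id r η lam))
    (M := N + lam) (fun y y' h => ?_) fun i hi y => ?_
  · exact congrArg₂ (· ∧ ·) (dependsOn_tauSR_le r id η _ h)
      (dependsOn_le_tauSR r id η lam fun k hk => h k ⟨hk.1, by grind⟩)
  · refine ((isUpperSet_tauSR_le hr η _).preimage update_mono).inter fun t t' _ ht => ?_
    refine (dependsOn_le_tauSR r id η lam fun k hk => ?_).to_iff.1 ht
    have hki : k ≠ i := (hk.2.trans_le hi).ne
    rw [update_of_ne hki, update_of_ne hki]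

end ChangePoint

section TailSum

lemma ENat.toENNReal_eq_tsum (m : ℕ∞) :
    (m : ℝ≥0∞) = ∑' k : ℕ, if (k : ℕ∞) < m then 1 else 0 := by
  induction m using ENat.recTopCoe with
  | top => simp
  | coe n =>
    rw [tsum_eq_sum (s := Finset.range n) fun k hk => by simpa using hk,
      Finset.sum_ite_of_true fun k hk => by exact_mod_cast Finset.mem_range.1 hk]
    simp

variable {Ω : Type*} [MeasurableSpace Ω] {μ ν : Measure Ω} {Z : Ω → ℕ∞}

lemma lintegral_enat_eq_tsum (hZ : ∀ k : ℕ, MeasurableSet {ω | (k : ℕ∞) < Z ω}) :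
    ∫⁻ ω, (Z ω : ℝ≥0∞) ∂μ = ∑' k : ℕ, μ {ω | (k : ℕ∞) < Z ω} := calc
  _ = ∫⁻ ω, ∑' k : ℕ, {ω | (k : ℕ∞) < Z ω}.indicator 1 ω ∂μ := lintegral_congr fun ω => by
      simp only [indicator_apply, mem_ofPred_eq, Pi.one_apply]
      exact ENat.toENNReal_eq_tsum _
  _ = ∑' k : ℕ, ∫⁻ ω, {ω | (k : ℕ∞) < Z ω}.indicator 1 ω ∂μ :=
      lintegral_tsum fun k => (measurable_one.indicator (hZ k)).aemeasurable
  _ = _ := by simp only [lintegral_indicator_one (hZ _)]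

lemma lintegral_enat_le_of_forall_measure_le [IsFiniteMeasure ν] (huniv : μ univ = ν univ)
    (hZ : ∀ k : ℕ, MeasurableSet {ω | Z ω ≤ k})
    (h : ∀ k : ℕ, μ {ω | Z ω ≤ k} ≤ ν {ω | Z ω ≤ k}) :
    ∫⁻ ω, (Z ω : ℝ≥0∞) ∂ν ≤ ∫⁻ ω, (Z ω : ℝ≥0∞) ∂μ := by
  have hcompl : ∀ k : ℕ, {ω | (k : ℕ∞) < Z ω} = {ω | Z ω ≤ k}ᶜ := fun k => by
    ext; simp [not_le]
  have hμfin : μ univ ≠ ∞ := huniv ▸ measure_ne_top ν univ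
  simp only [lintegral_enat_eq_tsum fun k => hcompl k ▸ (hZ k).compl, hcompl]
  refine ENNReal.tsum_le_tsum fun k => ?_
  rw [measure_compl (hZ k) (measure_ne_top _ _),
    measure_compl (hZ k) (ne_top_of_le_ne_top hμfin (measure_mono (subset_univ _)))]
  exact tsub_le_tsub huniv.symm.le (h k)

end TailSum

theorem stmt_14_general {𝒳 : Type*} [MeasurableSpace 𝒳]
    (ν0 ν1u ν1 : Measure 𝒳)
    (hdom : StochLarger (ν1.map (llr ν1u ν0)) (ν1u.map (llr ν1u ν0)))
    (r : ℝ) (hr : 0 ≤ r) (η : ℝ) (lam : ℕ)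
    -- `P₁ = P_λ^{ν0, ν̲1}` and `P₂ = P_λ^{ν0, ν1}` are the change-point product laws
    (P₁ P₂ : Measure (ℕ → 𝒳))
    [IsProbabilityMeasure P₂]
    (hP₁indep : iIndepFun (fun (n : ℕ) (ω : ℕ → 𝒳) => ω n) P₁)
    (hP₂indep : iIndepFun (fun (n : ℕ) (ω : ℕ → 𝒳) => ω n) P₂)
    (hP₁marg : ∀ n : ℕ, 1 ≤ n →
      P₁.map (fun ω => ω n) = if n < lam then ν0 else ν1u)
    (hP₂marg : ∀ n : ℕ, 1 ≤ n →
      P₂.map (fun ω => ω n) = if n < lam then ν0 else ν1) :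
    (∀ N : ℕ, 1 ≤ N →
      P₁ ({ω | tauSR r (llr ν1u ν0) η ω - (lam : ℕ∞) ≤ (N : ℕ∞)}
            ∩ {ω | (lam : ℕ∞) ≤ tauSR r (llr ν1u ν0) η ω})
          / P₁ {ω | (lam : ℕ∞) ≤ tauSR r (llr ν1u ν0) η ω}
        ≤ P₂ ({ω | tauSR r (llr ν1u ν0) η ω - (lam : ℕ∞) ≤ (N : ℕ∞)}
            ∩ {ω | (lam : ℕ∞) ≤ tauSR r (llr ν1u ν0) η ω})
          / P₂ {ω | (lam : ℕ∞) ≤ tauSR r (llr ν1u ν0) η ω}) ∧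
    (∫⁻ ω in {ω | (lam : ℕ∞) ≤ tauSR r (llr ν1u ν0) η ω},
          ((tauSR r (llr ν1u ν0) η ω - (lam : ℕ∞) : ℕ∞) : ℝ≥0∞) ∂P₂)
        / P₂ {ω | (lam : ℕ∞) ≤ tauSR r (llr ν1u ν0) η ω}
      ≤ (∫⁻ ω in {ω | (lam : ℕ∞) ≤ tauSR r (llr ν1u ν0) η ω},
          ((tauSR r (llr ν1u ν0) η ω - (lam : ℕ∞) : ℕ∞) : ℝ≥0∞) ∂P₁)
        / P₁ {ω | (lam : ℕ∞) ≤ tauSR r (llr ν1u ν0) η ω} := by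
  have hL := measurable_llr ν1u ν0
  have hB := measurableSet_le_tauSR hL r η lam
  have hP₁ : IsChangePointLaw P₁ lam ν0 ν1u := ⟨hP₁indep, hP₁marg⟩
  have hP₂ : IsChangePointLaw P₂ lam ν0 ν1 := ⟨hP₂indep, hP₂marg⟩
  have hden := measure_le_tauSR_eq (r := r) hL η hP₁ hP₂
  have hnum := measure_tauSR_sub_le_inter_le_tauSR_le hL hdom hr η hP₁ hP₂
  refine ⟨fun N _ => ?_, ?_⟩
  · rw [hden]
    exact ENNReal.div_le_div_right (hnum N) _
  · rw [hden]
    refine ENNReal.div_le_div_right (lintegral_enat_le_of_forall_measure_le ?_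
      (measurableSet_tauSR_sub_le hL r η lam) fun k => ?_) _
    · rw [Measure.restrict_apply_univ, Measure.restrict_apply_univ, hden]
    · rw [Measure.restrict_apply' hB, Measure.restrict_apply' hB]
      exact hnum k

/-- **core estimate in the proof of Theorem 2, for the SR-`r` procedure.**
Let `ν̲1 ≪ ν0` with `L* = log (dν̲1/dν0)` continuous on the support of `ν0`, and let `ν1` be
a probability measure whose `L*`-pushforward stochastically dominates that of `ν̲1`.  Fix
`r ≥ 0` and let `τ_r` be the SR-`r` stopping rule with threshold `η`.  Then for every change
point `λ ≥ 1` and every `N ≥ 1`, provided `P_λ^{ν0,ν̲1}(τ_r ≥ λ) > 0`,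
`P_λ^{ν0,ν̲1}(τ_r − λ ≤ N | τ_r ≥ λ) ≤ P_λ^{ν0,ν1}(τ_r − λ ≤ N | τ_r ≥ λ)`, and consequently
`E_λ^{ν0,ν̲1}[τ_r − λ | τ_r ≥ λ] ≥ E_λ^{ν0,ν1}[τ_r − λ | τ_r ≥ λ]`. -/
theorem stmt_14 {𝒳 : Type*} [MeasurableSpace 𝒳] [TopologicalSpace 𝒳]
    (ν0 ν1u ν1 : Measure 𝒳)
    [IsProbabilityMeasure ν0] [IsProbabilityMeasure ν1u] [IsProbabilityMeasure ν1]
    (habs : ν1u ≪ ν0)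
    (hLcont : ContinuousOn (llr ν1u ν0) (measSupport ν0))
    (hdom : StochLarger (ν1.map (llr ν1u ν0)) (ν1u.map (llr ν1u ν0)))
    (r : ℝ) (hr : 0 ≤ r) (η : ℝ) (lam : ℕ) (hlam : 1 ≤ lam)
    -- `P₁ = P_λ^{ν0, ν̲1}` and `P₂ = P_λ^{ν0, ν1}` are the change-point product laws
    (P₁ P₂ : Measure (ℕ → 𝒳))
    [IsProbabilityMeasure P₁] [IsProbabilityMeasure P₂]
    (hP₁indep : iIndepFun (fun (n : ℕ) (ω : ℕ → 𝒳) => ω n) P₁)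
    (hP₂indep : iIndepFun (fun (n : ℕ) (ω : ℕ → 𝒳) => ω n) P₂)
    (hP₁marg : ∀ n : ℕ, 1 ≤ n →
      P₁.map (fun ω => ω n) = if n < lam then ν0 else ν1u)
    (hP₂marg : ∀ n : ℕ, 1 ≤ n →
      P₂.map (fun ω => ω n) = if n < lam then ν0 else ν1)
    (hpos : 0 < P₁ {ω | (lam : ℕ∞) ≤ tauSR r (llr ν1u ν0) η ω}) :
    (∀ N : ℕ, 1 ≤ N →
      P₁ ({ω | tauSR r (llr ν1u ν0) η ω - (lam : ℕ∞) ≤ (N : ℕ∞)}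
            ∩ {ω | (lam : ℕ∞) ≤ tauSR r (llr ν1u ν0) η ω})
          / P₁ {ω | (lam : ℕ∞) ≤ tauSR r (llr ν1u ν0) η ω}
        ≤ P₂ ({ω | tauSR r (llr ν1u ν0) η ω - (lam : ℕ∞) ≤ (N : ℕ∞)}
            ∩ {ω | (lam : ℕ∞) ≤ tauSR r (llr ν1u ν0) η ω})
          / P₂ {ω | (lam : ℕ∞) ≤ tauSR r (llr ν1u ν0) η ω}) ∧
    (∫⁻ ω in {ω | (lam : ℕ∞) ≤ tauSR r (llr ν1u ν0) η ω},
          ((tauSR r (llr ν1u ν0) η ω - (lam : ℕ∞) : ℕ∞) : ℝ≥0∞) ∂P₂)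
        / P₂ {ω | (lam : ℕ∞) ≤ tauSR r (llr ν1u ν0) η ω}
      ≤ (∫⁻ ω in {ω | (lam : ℕ∞) ≤ tauSR r (llr ν1u ν0) η ω},
          ((tauSR r (llr ν1u ν0) η ω - (lam : ℕ∞) : ℕ∞) : ℝ≥0∞) ∂P₁)
        / P₁ {ω | (lam : ℕ∞) ≤ tauSR r (llr ν1u ν0) η ω} :=
  stmt_14_general ν0 ν1u ν1 hdom r hr η lam P₁ P₂ hP₁indep hP₂indep hP₁marg hP₂marg
end
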